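/- arXiv:2407.11314 — 10 statements merged into one kernel-verified Lean document; each statement's English description precedes it below -/
import Mathlib

section
/- If |K₂/(2K₁)| ≤ 1 and α = arccos(−K₂/(2K₁)), then Θ₅* = (0, 2α, α) and Θ₆* = (0, 2π−2α, 2π−α) are critical points of the three-oscillator Kuramoto system: the right-hand sides θᵢ' all vanish at these points. -/
open Real

/-- Right-hand side of the three-oscillator Kuramoto system. -/
noncomputable def kuramotoRHS (K₁ K₂ : ℝ) (Θ : ℝ × ℝ × ℝ) : ℝ × ℝ × ℝ :=
  (K₂/3 * sin (Θ.2.2 - Θ.1) + K₁/3 * sin (Θ.2.1 - Θ.1),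
   K₂/3 * sin (Θ.2.2 - Θ.2.1) + K₁/3 * sin (Θ.1 - Θ.2.1),
   K₂/3 * sin (Θ.1 - Θ.2.2) + K₂/3 * sin (Θ.2.1 - Θ.2.2))

/-! The vector field is odd and `2π`-periodic in each phase, so `Θ₆* ≡ -Θ₅* (mod 2π)` is an
equilibrium as soon as `Θ₅*` is one. At `Θ₅* = (0, 2α, α)` the first two equations reduce to
`± sin α (K₂ + 2 K₁ cos α) / 3` and the third cancels on its own, so everything comes down to
`cos α = -K₂ / (2 K₁)`. -/

lemma kuramotoRHS_neg (K₁ K₂ : ℝ) (Θ : ℝ × ℝ × ℝ) :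
    kuramotoRHS K₁ K₂ (-Θ) = -kuramotoRHS K₁ K₂ Θ := by
  have sin_swap (a b : ℝ) : sin (a - b) = -sin (b - a) := by rw [← sin_neg, neg_sub]
  simp only [kuramotoRHS, Prod.fst_neg, Prod.snd_neg, Prod.neg_mk, neg_sub_neg, Prod.mk.injEq]
  rw [sin_swap Θ.1 Θ.2.2, sin_swap Θ.1 Θ.2.1, sin_swap Θ.2.1 Θ.2.2]
  refine ⟨by ring, by ring, by ring⟩

lemma kuramotoRHS_add_two_pi (K₁ K₂ a b c : ℝ) :
    kuramotoRHS K₁ K₂ (a, b + 2 * π, c + 2 * π) = kuramotoRHS K₁ K₂ (a, b, c) := by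
  simp only [kuramotoRHS, add_sub_right_comm _ (2 * π), sub_add_eq_sub_sub,
    sin_add_two_pi, sin_sub_two_pi]

lemma kuramotoRHS_zero_two_mul_eq_zero {K₁ K₂ α : ℝ} (hK : K₂ = -2 * K₁ * cos α) :
    kuramotoRHS K₁ K₂ (0, 2 * α, α) = 0 := by
  subst hK
  simp only [kuramotoRHS, Prod.mk_eq_zero, sub_zero, zero_sub, sin_neg, sin_two_mul,
    show α - 2 * α = -α by ring, show 2 * α - α = α by ring]
  refine ⟨by ring, by ring, by ring⟩

theorem stmt4_general (K₁ K₂ : ℝ) (hK₁ : K₁ ≠ 0)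
    (h : |K₂ / (2 * K₁)| ≤ 1) (α : ℝ) (hα : α = arccos (-(K₂ / (2 * K₁)))) :
    kuramotoRHS K₁ K₂ (0, 2 * α, α) = 0 ∧
    kuramotoRHS K₁ K₂ (0, 2 * π - 2 * α, 2 * π - α) = 0 := by
  obtain ⟨h_ge, h_le⟩ := abs_le.mp h
  have hcos : cos α = -(K₂ / (2 * K₁)) := hα ▸ cos_arccos (by linarith) (by linarith)
  have hK : K₂ = -2 * K₁ * cos α := by rw [hcos]; field_simp
  have hΘ₅ := kuramotoRHS_zero_two_mul_eq_zero hK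
  refine ⟨hΘ₅, ?_⟩
  calc kuramotoRHS K₁ K₂ (0, 2 * π - 2 * α, 2 * π - α)
      = kuramotoRHS K₁ K₂ (-0, -(2 * α) + 2 * π, -α + 2 * π) := by
        rw [neg_zero, neg_add_eq_sub, neg_add_eq_sub]
    _ = kuramotoRHS K₁ K₂ (-(0, 2 * α, α)) := kuramotoRHS_add_two_pi ..
    _ = 0 := by rw [kuramotoRHS_neg, hΘ₅, neg_zero]

theorem stmt4 (K₁ K₂ : ℝ) (hK₁ : K₁ ≠ 0) (hK₂ : K₂ ≠ 0)
    (h : |K₂ / (2 * K₁)| ≤ 1) (α : ℝ) (hα : α = arccos (-(K₂ / (2 * K₁)))) :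
    kuramotoRHS K₁ K₂ (0, 2 * α, α) = 0 ∧
    kuramotoRHS K₁ K₂ (0, 2 * π - 2 * α, 2 * π - α) = 0 :=
  stmt4_general K₁ K₂ hK₁ h α hα
end

section
/- Every critical point Θ* = (θ₁*, θ₂*, θ₃*) ∈ [0, 2π)³ with θ₁* = 0 of the three-oscillator Kuramoto system, under the assumption |K₂/(2K₁)| > 1 with K₁, K₂ ≠ 0, is one of the four points (0,π,0), (0,π,π), (0,0,0), (0,0,π). -/
open Real

lemma sin_zero_cases (x : ℝ) (hx : x ∈ Set.Ico 0 (2 * π)) (hs : Real.sin x = 0) :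
    x = 0 ∨ x = π := by
  rcases Real.sin_eq_zero_iff.mp hs with ⟨n, hn⟩
  have h0 : (0:ℝ) ≤ (n:ℝ) * π := hn ▸ hx.1
  have h2 : (n:ℝ) * π < 2 * π := hn ▸ hx.2
  have hn0 : (0:ℝ) ≤ (n:ℝ) := nonneg_of_mul_nonneg_right (by linarith : (0:ℝ) ≤ π * n) pi_pos
  have hn2 : (n:ℝ) < 2 := lt_of_mul_lt_mul_right h2 pi_pos.le
  have hn0' : (0:ℤ) ≤ n := by exact_mod_cast hn0
  have hn2' : n < 2 := by exact_mod_cast hn2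
  interval_cases n
  · left; simpa using hn.symm
  · right; simpa using hn.symm

theorem stmt5 (K₁ K₂ : ℝ) (hK₁ : K₁ ≠ 0) (hK₂ : K₂ ≠ 0)
    (h : 1 < |K₂ / (2 * K₁)|) (θ₂ θ₃ : ℝ)
    (hθ₂ : θ₂ ∈ Set.Ico 0 (2 * π)) (hθ₃ : θ₃ ∈ Set.Ico 0 (2 * π))
    (hcrit : kuramotoRHS K₁ K₂ (0, θ₂, θ₃) = 0) :
    (θ₂, θ₃) = (π, 0) ∨ (θ₂, θ₃) = (π, π) ∨ (θ₂, θ₃) = (0, 0) ∨ (θ₂, θ₃) = (0, π) := by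
  rw [Prod.ext_iff, Prod.ext_iff] at hcrit
  obtain ⟨e1, e2, e3⟩ := hcrit
  simp only [kuramotoRHS, sub_zero, zero_sub, Real.sin_neg, Prod.fst_zero, Prod.snd_zero] at e1 e2 e3
  set s2 := Real.sin θ₂ with hs2def
  set c2 := Real.cos θ₂ with hc2def
  set s3 := Real.sin θ₃ with hs3def
  set c3 := Real.cos θ₃ with hc3def
  have e1' : K₂ * s3 + K₁ * s2 = 0 := by linarith
  have e2' : K₂ * (s3 * c2 - c3 * s2) - K₁ * s2 = 0 := by
    rw [Real.sin_sub] at e2; linarith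
  have hpy2 : s2 ^ 2 + c2 ^ 2 = 1 := Real.sin_sq_add_cos_sq θ₂
  have hpy3 : s3 ^ 2 + c3 ^ 2 = 1 := Real.sin_sq_add_cos_sq θ₃
  -- derive K₂² > 4 K₁²
  have h2K₁ : (2 : ℝ) * K₁ ≠ 0 := by simp [hK₁]
  have habs : |2 * K₁| < |K₂| := by
    rw [abs_div] at h
    exact (one_lt_div (abs_pos.mpr h2K₁)).mp h
  have hKsq : 4 * K₁ ^ 2 < K₂ ^ 2 := by
    nlinarith [abs_nonneg (2 * K₁), sq_abs (2 * K₁), sq_abs K₂]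
  have hK1sq : 0 < K₁ ^ 2 := lt_of_le_of_ne (sq_nonneg K₁) (Ne.symm (pow_ne_zero 2 hK₁))
  have hs2 : s2 = 0 := by
    by_contra hs2ne
    have key : s2 * (K₁ * (1 + c2) + K₂ * c3) = 0 := by
      linear_combination c2 * e1' - e2'
    have hc3 : K₂ * c3 = -(K₁ * (1 + c2)) := by
      rcases mul_eq_zero.mp key with h' | h'
      · exact absurd h' hs2ne
      · linarith
    have hs3 : K₂ * s3 = -(K₁ * s2) := by linarith
    have hsq : K₂ ^ 2 = K₁ ^ 2 * (2 + 2 * c2) := by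
      have h1 : (K₂ * s3) ^ 2 = (K₁ * s2) ^ 2 := by rw [hs3]; ring
      have h2 : (K₂ * c3) ^ 2 = (K₁ * (1 + c2)) ^ 2 := by rw [hc3]; ring
      nlinarith [h1, h2, hpy2, hpy3]
    have hc2le : c2 ≤ 1 := Real.cos_le_one θ₂
    nlinarith
  have hs3 : s3 = 0 := by
    have : K₂ * s3 = 0 := by rw [hs2] at e1'; linarith
    rcases mul_eq_zero.mp this with h' | h'
    · exact absurd h' hK₂
    · exact h'
  rcases sin_zero_cases θ₂ hθ₂ hs2 with h2 | h2 <;>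
    rcases sin_zero_cases θ₃ hθ₃ hs3 with h3 | h3
  · right; right; left; rw [h2, h3]
  · right; right; right; rw [h2, h3]
  · left; rw [h2, h3]
  · right; left; rw [h2, h3]
end

section
/- The Jacobian matrix of the three-oscillator Kuramoto system at Θ₁* = (0, π, 0), namely J = (1/3)·[[K₁−K₂, −K₁, K₂], [−K₁, K₁+K₂, −K₂], [K₂, −K₂, 0]], has eigenvalues 0, (K₁+√(K₁²+3K₂²))/3, and (K₁−√(K₁²+3K₂²))/3. -/
theorem stmt8 (K₁ K₂ : ℝ) (hK₁ : K₁ ≠ 0) (hK₂ : K₂ ≠ 0)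
    (J : Matrix (Fin 3) (Fin 3) ℝ)
    (hJ : J = (1/3 : ℝ) • !![K₁ - K₂, -K₁, K₂; -K₁, K₁ + K₂, -K₂; K₂, -K₂, 0]) :
    Module.End.HasEigenvalue (Matrix.toLin' J) 0 ∧
    Module.End.HasEigenvalue (Matrix.toLin' J) ((K₁ + Real.sqrt (K₁^2 + 3*K₂^2))/3) ∧
    Module.End.HasEigenvalue (Matrix.toLin' J) ((K₁ - Real.sqrt (K₁^2 + 3*K₂^2))/3) := by
  have hs2 : Real.sqrt (K₁^2 + 3*K₂^2) ^ 2 = K₁^2 + 3*K₂^2 :=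
    Real.sq_sqrt (by positivity)
  set s := Real.sqrt (K₁^2 + 3*K₂^2) with hsdef
  subst hJ
  refine ⟨?_, ?_, ?_⟩
  · apply Module.End.hasEigenvalue_of_hasEigenvector (x := ![1,1,1])
    constructor
    · rw [Module.End.mem_eigenspace_iff, Matrix.toLin'_apply]
      funext i
      fin_cases i <;>
        simp [Matrix.mulVec, dotProduct, Fin.sum_univ_three] <;> ring
    · intro h
      have := congrFun h 0
      simp at this
  · apply Module.End.hasEigenvalue_of_hasEigenvector
      (x := ![K₁ - s + 3*K₂, K₁ - s - 3*K₂, -2*(K₁ - s)])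
    constructor
    · rw [Module.End.mem_eigenspace_iff, Matrix.toLin'_apply]
      funext i
      fin_cases i <;>
        simp [Matrix.mulVec, dotProduct, Fin.sum_univ_three]
      · linear_combination hs2/3
      · linear_combination hs2/3
      · linear_combination (-2/3)*hs2
    · intro h
      have h0 := congrFun h 0
      have h1 := congrFun h 1
      simp at h0 h1
      have : K₂ = 0 := by linarith
      exact hK₂ this
  · apply Module.End.hasEigenvalue_of_hasEigenvector
      (x := ![K₁ + s + 3*K₂, K₁ + s - 3*K₂, -2*(K₁ + s)])
    constructor
    · rw [Module.End.mem_eigenspace_iff, Matrix.toLin'_apply]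
      funext i
      fin_cases i <;>
        simp [Matrix.mulVec, dotProduct, Fin.sum_univ_three]
      · linear_combination hs2/3
      · linear_combination hs2/3
      · linear_combination (-2/3)*hs2
    · intro h
      have h0 := congrFun h 0
      have h1 := congrFun h 1
      simp at h0 h1
      have : K₂ = 0 := by linarith
      exact hK₂ this
end

section
/- Assume |K₂/(2K₁)| ≤ 1 and let α = arccos(−K₂/(2K₁)). The Jacobian matrix of the three-oscillator Kuramoto system at the critical point Θ₅* = (0, 2α, α) has eigenvalues 0, (4K₁²−K₂²)/(6K₁), and K₂²/(2K₁). -/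
open Real

theorem stmt9 (K₁ K₂ : ℝ) (hK₁ : K₁ ≠ 0) (hK₂ : K₂ ≠ 0)
    (h : |K₂ / (2 * K₁)| ≤ 1) (α : ℝ) (hα : α = arccos (-(K₂ / (2 * K₁))))
    (J : Matrix (Fin 3) (Fin 3) ℝ)
    (hJ : J = !![-(K₁/3 * cos (2*α) + K₂/3 * cos α), K₁/3 * cos (2*α), K₂/3 * cos α;
                 K₁/3 * cos (2*α), -(K₁/3 * cos (2*α) + K₂/3 * cos α), K₂/3 * cos α;
                 K₂/3 * cos α, K₂/3 * cos α, -(K₂/3 * cos α + K₂/3 * cos α)]) :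
    Module.End.HasEigenvalue (Matrix.toLin' J) 0 ∧
    Module.End.HasEigenvalue (Matrix.toLin' J) ((4*K₁^2 - K₂^2)/(6*K₁)) ∧
    Module.End.HasEigenvalue (Matrix.toLin' J) (K₂^2/(2*K₁)) := by
  have hb : -1 ≤ -(K₂ / (2 * K₁)) ∧ -(K₂ / (2 * K₁)) ≤ 1 := by
    constructor <;> [nlinarith [abs_le.mp h]; nlinarith [abs_le.mp h]]
  have hc : cos α = -(K₂ / (2 * K₁)) := by
    rw [hα]; exact Real.cos_arccos hb.1 hb.2
  have hc2 : cos (2 * α) = 2 * cos α ^ 2 - 1 := Real.cos_two_mul α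
  have key : ∀ (μ : ℝ) (v : Fin 3 → ℝ), v ≠ 0 → J.mulVec v = μ • v →
      Module.End.HasEigenvalue (Matrix.toLin' J) μ := by
    intro μ v hv hm
    refine Module.End.hasEigenvalue_of_hasEigenvector ⟨?_, hv⟩
    rw [Module.End.mem_eigenspace_iff, Matrix.toLin'_apply, hm]
  refine ⟨key 0 ![1,1,1] ?_ ?_, key _ ![1,-1,0] ?_ ?_, key _ ![1,1,-2] ?_ ?_⟩
  · intro hv; have := congrFun hv 0; norm_num at this
  · subst hJ
    funext i
    fin_cases i <;>
      simp [Matrix.mulVec, dotProduct, Fin.sum_univ_three, hc, hc2] <;> ring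
  · intro hv; have := congrFun hv 0; norm_num at this
  · subst hJ
    funext i
    fin_cases i <;>
      simp [Matrix.mulVec, dotProduct, Fin.sum_univ_three, hc, hc2] <;>
      field_simp <;> ring
  · intro hv; have := congrFun hv 0; norm_num at this
  · subst hJ
    funext i
    fin_cases i <;>
      simp [Matrix.mulVec, dotProduct, Fin.sum_univ_three, hc, hc2] <;>
      field_simp <;> ring
end

section
/- For any nonzero reals K₁, K₂, the critical point Θ₁* = (0, π, 0) of the three-oscillator Kuramoto system is linearly unstable: its Jacobian has a strictly positive eigenvalue, namely (K₁+√(K₁²+3K₂²))/3 > 0. -/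
theorem stmt10 (K₁ K₂ : ℝ) (hK₁ : K₁ ≠ 0) (hK₂ : K₂ ≠ 0)
    (J : Matrix (Fin 3) (Fin 3) ℝ)
    (hJ : J = (1/3 : ℝ) • !![K₁ - K₂, -K₁, K₂; -K₁, K₁ + K₂, -K₂; K₂, -K₂, 0]) :
    0 < (K₁ + Real.sqrt (K₁^2 + 3*K₂^2))/3 ∧
    Module.End.HasEigenvalue (Matrix.toLin' J) ((K₁ + Real.sqrt (K₁^2 + 3*K₂^2))/3) := by
  set s := Real.sqrt (K₁^2 + 3*K₂^2) with hs
  have hs0 : 0 ≤ s := Real.sqrt_nonneg _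
  have hs2 : s^2 = K₁^2 + 3*K₂^2 := Real.sq_sqrt (by positivity)
  have habs : |K₁| < s := by
    have h1 : Real.sqrt (K₁^2) < s := by
      apply Real.sqrt_lt_sqrt (by positivity)
      nlinarith [sq_pos_of_ne_zero hK₂]
    simpa [Real.sqrt_sq_eq_abs] using h1
  have hpos : 0 < (K₁ + s)/3 := by
    have := neg_abs_le K₁
    linarith
  refine ⟨hpos, ?_⟩
  apply Module.End.hasEigenvalue_of_hasEigenvector
    (x := ![K₁ + s - K₂, -(K₁ + s + K₂), 2*K₂])
  constructor
  · rw [Module.End.mem_eigenspace_iff, Matrix.toLin'_apply, hJ]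
    funext i
    fin_cases i <;>
      simp [Matrix.mulVec, dotProduct, Fin.sum_univ_three] <;>
      nlinarith [hs2]
  · intro h
    have h2 := congrFun h 2
    simp at h2
    exact hK₂ h2
end

section
/- For all x ∈ [0, π], 2·sin(x/2 + π/6) ≥ x/5 + 1. -/
/-!
`sin` is concave on `[0, π]` and `x / 2 + π / 6` runs through `[π / 6, 2π / 3]` as `x` runs
through `[0, π]`, so `2 sin (x / 2 + π / 6)` lies above its chord `1 + (√3 - 1) x / π`.
The chord dominates `1 + x / 5` because `π ≤ 5 (√3 - 1) ≈ 3.66`.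
-/

open Real

theorem sin_two_pi_div_three : sin (2 * π / 3) = √3 / 2 := by
  rw [show 2 * π / 3 = π - π / 3 by ring, sin_pi_sub, sin_pi_div_three]

theorem pi_le_five_mul_sqrt_three_sub_one : π ≤ 5 * (√3 - 1) := by
  have hsqrt : (1.73 : ℝ) ≤ √3 := le_sqrt_of_sq_le (by norm_num)
  linarith [pi_lt_d2]

theorem one_add_mul_le_two_mul_sin {x : ℝ} (hx : x ∈ Set.Icc 0 π) :
    1 + x / π * (√3 - 1) ≤ 2 * sin (x / 2 + π / 6) := by
  obtain ⟨hx0, hxπ⟩ := hx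
  have hμ0 : 0 ≤ x / π := div_nonneg hx0 pi_pos.le
  have hμ1 : x / π ≤ 1 := div_le_one_of_le₀ hxπ pi_pos.le
  have hchord := strictConcaveOn_sin_Icc.concaveOn.2 (x := π / 6) (y := 2 * π / 3)
    ⟨by positivity, by linarith [pi_pos]⟩ ⟨by positivity, by linarith [pi_pos]⟩
    (sub_nonneg.2 hμ1) hμ0 (sub_add_cancel 1 _)
  have hpoint : (1 - x / π) • (π / 6) + (x / π) • (2 * π / 3) = x / 2 + π / 6 := by
    simp only [smul_eq_mul]
    field_simp
    ring
  rw [hpoint, smul_eq_mul, smul_eq_mul, sin_pi_div_six, sin_two_pi_div_three] at hchord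
  linarith

theorem stmt13 (x : ℝ) (hx : x ∈ Set.Icc 0 π) :
    2 * sin (x/2 + π/6) ≥ x/5 + 1 := by
  have hslope : x / 5 ≤ x / π * (√3 - 1) := by
    rw [div_mul_eq_mul_div, div_le_div_iff₀ (by norm_num) pi_pos]
    nlinarith [pi_le_five_mul_sqrt_three_sub_one, hx.1]
  linarith [one_add_mul_le_two_mul_sin hx]
end

section
/- For all x ∈ [0, π], sin(x − π/3) + cos(x/2)·sin(x/2 + π/3) ≥ x/5. -/
open Real

theorem stmt14 (x : ℝ) (hx : x ∈ Set.Icc 0 π) :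
    sin (x - π/3) + cos (x/2) * sin (x/2 + π/3) ≥ x/5 := by
  obtain ⟨hx0, hxpi⟩ := hx
  have hpi1 : (3.1415 : ℝ) < π := pi_gt_d4
  have hpi2 : π < 3.1416 := pi_lt_d4
  have hpipos : (0:ℝ) < π := by linarith
  have hpisq : π^2 ≤ 9.87 := by nlinarith
  set s := sin (x/2) with hs
  set c := cos (x/2) with hc
  have hpy : s^2 + c^2 = 1 := sin_sq_add_cos_sq (x/2)
  have hsinx : sin x = 2 * s * c := by
    rw [hs, hc, ← sin_two_mul]; ring_nf
  have hident : sin (x - π/3) + cos (x/2) * sin (x/2 + π/3)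
      = (3/2) * s * c + (Real.sqrt 3 / 2) * s^2 := by
    have hxx : x - π/3 = 2 * (x/2) - π/3 := by ring
    rw [hxx, sin_sub, sin_add, sin_two_mul, cos_two_mul, sin_pi_div_three,
      cos_pi_div_three]
    linear_combination (-(Real.sqrt 3) / 2) * hpy
  rw [hident]
  have hsqrt3 : (1.732 : ℝ) ≤ Real.sqrt 3 := by
    rw [show (1.732 : ℝ) = Real.sqrt (1.732^2) by rw [Real.sqrt_sq]; norm_num]
    exact Real.sqrt_le_sqrt (by norm_num)
  have hs_lb : x / π ≤ s := by
    have h := Real.mul_le_sin (x := x/2) (by linarith) (by linarith)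
    rwa [show 2/π * (x/2) = x/π by ring] at h
  have hj1 : x ≤ π/2 → 2/π * x ≤ 2 * s * c := by
    intro h; have h' := Real.mul_le_sin hx0 h; rwa [hsinx] at h'
  have hj2 : π/2 ≤ x → 2/π * (π - x) ≤ 2 * s * c := by
    intro h
    have h' := Real.mul_le_sin (x := π - x) (by linarith) (by linarith)
    rwa [sin_pi_sub, hsinx] at h'
  clear_value s c
  clear hs hc hsinx hident hpy
  have hsq0 : 0 ≤ s^2 := sq_nonneg s
  rcases le_or_gt x (π/2) with hcase | hcase
  · -- small x : Jordan on sin x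
    have hj : 0.63 * x ≤ 2 * s * c := by
      have h := hj1 hcase
      have h2 : 0.63 * x ≤ 2/π * x := by
        rw [div_mul_eq_mul_div, le_div_iff₀ hpipos]; nlinarith
      linarith
    nlinarith [mul_nonneg (Real.sqrt_nonneg 3) hsq0, hj, hx0]
  · -- large x
    have hj : 0.63 * (π - x) ≤ 2 * s * c := by
      have h := hj2 hcase.le
      have h2 : 0.63 * (π - x) ≤ 2/π * (π - x) := by
        rw [div_mul_eq_mul_div, le_div_iff₀ hpipos]; nlinarith
      linarith
    have hx_pos : 0 < x := by linarith
    have hsp : 0 < x / π := by positivity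
    have hsq : (x/π)^2 ≤ s^2 := by nlinarith
    have h3 : 0.101 * x^2 ≤ (x/π)^2 := by
      rw [div_pow, le_div_iff₀ (by positivity)]
      nlinarith [sq_nonneg x, hpisq]
    have hsq' : 0.101 * x^2 ≤ s^2 := le_trans h3 hsq
    have hC : 0.174 * x^2 ≤ Real.sqrt 3 * s^2 := by
      nlinarith [sq_nonneg x, hsqrt3, hsq', Real.sqrt_nonneg 3]
    nlinarith [sq_nonneg (x - 3.1416), hC, hj, hxpi, hpi1, hpi2, hx_pos]
end

section
/- Assume K₁ = −K₂ < 0 (i.e., K₂ > 0). In the shifted system θ̃₁' = (K₂/3)sin(θ̃₃−θ̃₁+π/3) − (K₁/3)sin(θ̃₂−θ̃₁−π/3), θ̃₂' = (K₂/3)sin(θ̃₃−θ̃₂−π/3) − (K₁/3)sin(θ̃₁−θ̃₂+π/3), θ̃₃' = (K₂/3)sin(θ̃₁−θ̃₃−π/3) + (K₂/3)sin(θ̃₂−θ̃₃+π/3), if at some time t one has θ̃₃(t) ≥ θ̃₂(t) ≥ θ̃₁(t) with D := θ̃₃(t) − θ̃₁(t), then θ̃₃'(t) − θ̃₁'(t)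 = −(2K₂/3)·cos(D/2 + π/6)·[2sin(D/2 + π/6) − cos(θ̃₂(t) − (θ̃₃(t)+θ̃₁(t))/2)]. -/
open Real

theorem stmt16 (K₁ K₂ : ℝ) (hK : K₁ = -K₂) (hK₂ : 0 < K₂)
    (θ₁ θ₂ θ₃ : ℝ → ℝ)
    (h₁ : ∀ s, HasDerivAt θ₁ (K₂/3 * sin (θ₃ s - θ₁ s + π/3) - K₁/3 * sin (θ₂ s - θ₁ s - π/3)) s)
    (h₂ : ∀ s, HasDerivAt θ₂ (K₂/3 * sin (θ₃ s - θ₂ s - π/3) - K₁/3 * sin (θ₁ s - θ₂ s + π/3)) s)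
    (h₃ : ∀ s, HasDerivAt θ₃ (K₂/3 * sin (θ₁ s - θ₃ s - π/3) + K₂/3 * sin (θ₂ s - θ₃ s + π/3)) s)
    (t : ℝ) (hord₁ : θ₁ t ≤ θ₂ t) (hord₂ : θ₂ t ≤ θ₃ t)
    (D : ℝ) (hD : D = θ₃ t - θ₁ t) :
    deriv θ₃ t - deriv θ₁ t
      = -(2*K₂/3) * cos (D/2 + π/6)
          * (2 * sin (D/2 + π/6) - cos (θ₂ t - (θ₃ t + θ₁ t)/2)) := by
  rw [(h₃ t).deriv, (h₁ t).deriv]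
  set a := θ₁ t
  set b := θ₂ t
  set c := θ₃ t
  set u := D/2 + π/6 with hu
  set v := b - (c + a)/2 with hv
  have e1 : a - c - π/3 = -(2*u) := by rw [hu, hD]; ring
  have e2 : b - c + π/3 = (v - u) + π/2 := by rw [hu, hv, hD]; ring
  have e3 : c - a + π/3 = 2*u := by rw [hu, hD]; ring
  have e4 : b - a - π/3 = (v + u) - π/2 := by rw [hu, hv, hD]; ring
  clear_value u v
  rw [hK, e1, e2, e3, e4, sin_neg, sin_two_mul]
  have s1 : sin ((v - u) + π/2) = cos v * cos u + sin v * sin u := by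
    rw [sin_add, sin_pi_div_two, cos_pi_div_two, cos_sub]; ring
  have s2 : sin ((v + u) - π/2) = -(cos v * cos u - sin v * sin u) := by
    rw [sin_sub, sin_pi_div_two, cos_pi_div_two, cos_add]; ring
  rw [s1, s2]
  ring
end

section
/- Assume K₂ > 0. If real numbers θ̃₁, θ̃₂, θ̃₃ satisfy θ̃₃ ≥ θ̃₂ ≥ θ̃₁ and D := θ̃₃ − θ̃₁ satisfies 0 ≤ D ≤ 2π/3 − δ for some δ ∈ (0, 2π/3], then the expression −(2K₂/3)·cos(D/2+π/6)·[2sin(D/2+π/6) − cos(θ̃₂ − (θ̃₃+θ̃₁)/2)] is at most −(2K₂/15)·sin(δ/2)·D. -/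
open Real

/-! Both factors of the product are bounded below: `cos (D/2 + π/6) ≥ sin (δ/2)` because
`D/2 + π/6 ≤ π/2 - δ/2`, and `2 sin (D/2 + π/6) - cos (⋯) ≥ D/5` because `sin` is concave, so on
`[π/6, π/2]` it lies above its chord from `1/2` to `1`, while `cos ≤ 1`. -/

lemma sin_le_cos_of_add_le_pi_div_two {x y : ℝ} (hx : 0 ≤ x) (hy : -(π / 2) ≤ y)
    (hxy : x + y ≤ π / 2) : sin y ≤ cos x := by
  rw [← cos_pi_div_two_sub]
  exact cos_le_cos_of_nonneg_of_le_pi hx (by linarith) (by linarith)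

lemma one_add_div_five_le_two_sin {D : ℝ} (h0 : 0 ≤ D) (h1 : D ≤ 2 * π / 3) :
    D / 5 + 1 ≤ 2 * sin (D / 2 + π / 6) := by
  have hπ := pi_pos
  set t : ℝ := 3 * D / (2 * π)
  have ht0 : 0 ≤ t := by positivity
  have ht1 : t ≤ 1 := by
    rw [div_le_one (by positivity)]
    linarith
  have hDt : D / 5 ≤ t := by
    rw [le_div_iff₀ (by positivity)]
    nlinarith [pi_lt_d2]
  have hchord := strictConcaveOn_sin_Icc.concaveOn.2
    (⟨by positivity, by linarith⟩ : π / 6 ∈ Set.Icc 0 π)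
    (⟨by positivity, by linarith⟩ : π / 2 ∈ Set.Icc 0 π) (sub_nonneg.2 ht1) ht0 (by ring)
  have harg : (1 - t) • (π / 6) + t • (π / 2) = D / 2 + π / 6 := by
    simp only [smul_eq_mul, t]
    field_simp
    ring
  rw [harg, sin_pi_div_six, sin_pi_div_two, smul_eq_mul, smul_eq_mul] at hchord
  linarith

theorem stmt17 (K₂ : ℝ) (hK₂ : 0 < K₂) (δ : ℝ) (hδ : δ ∈ Set.Ioc 0 (2*π/3))
    (θ₁ θ₂ θ₃ : ℝ) (h₁₂ : θ₁ ≤ θ₂) (h₂₃ : θ₂ ≤ θ₃)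
    (D : ℝ) (hD : D = θ₃ - θ₁) (hD' : D ≤ 2*π/3 - δ) :
    -(2*K₂/3) * cos (D/2 + π/6) * (2 * sin (D/2 + π/6) - cos (θ₂ - (θ₃ + θ₁)/2))
      ≤ -(2*K₂/15) * sin (δ/2) * D := by
  obtain ⟨hδ0, hδ1⟩ := hδ
  have hπ := pi_pos
  have hD0 : 0 ≤ D := by linarith
  have hsin : 0 ≤ sin (δ / 2) := sin_nonneg_of_nonneg_of_le_pi (by positivity) (by linarith)
  have hcos : sin (δ / 2) ≤ cos (D / 2 + π / 6) :=
    sin_le_cos_of_add_le_pi_div_two (by positivity) (by linarith) (by linarith)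
  have hE : D / 5 ≤ 2 * sin (D / 2 + π / 6) - cos (θ₂ - (θ₃ + θ₁) / 2) := by
    linarith [one_add_div_five_le_two_sin hD0 (by linarith), cos_le_one (θ₂ - (θ₃ + θ₁) / 2)]
  calc -(2*K₂/3) * cos (D/2 + π/6) * (2 * sin (D/2 + π/6) - cos (θ₂ - (θ₃ + θ₁)/2))
      = -(2*K₂/3) * (cos (D/2 + π/6) * (2 * sin (D/2 + π/6) - cos (θ₂ - (θ₃ + θ₁)/2))) := by
        ring
    _ ≤ -(2*K₂/3) * (sin (δ / 2) * (D / 5)) :=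
        mul_le_mul_of_nonpos_left (mul_le_mul hcos hE (by positivity) (hsin.trans hcos))
          (by linarith)
    _ = -(2*K₂/15) * sin (δ/2) * D := by ring
end

section
/- Assume K₂ > 0. If real numbers θ̃₁ ≤ θ̃₂ ≤ θ̃₃ have diameter D := θ̃₃ − θ̃₁ ∈ [0, π] and |θ̃₂ − (θ̃₃+θ̃₁)/2| ≤ D/2, then −(2K₂/3)·[sin(D − π/3) + cos(θ̃₂ − (θ̃₃+θ̃₁)/2)·sin(D/2 + π/3)] ≤ −(2K₂/15)·D. -/
open Real

/-! The cosine factor enters with `sin (x/2 + π/3) ≥ 0`, so the worst case `|m| = x/2` reduces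
everything to the one-variable bound `x/5 ≤ 3/4 sin x + √3/4 (1 - cos x)`, which follows from
Jordan's inequality `2x/π ≤ sin x` (applied to `x`, resp. to `x - π/2` when `x ≥ π/2`). -/

theorem sin_sub_pi_div_three_add_cos_half_mul_sin_eq (x : ℝ) :
    sin (x - π/3) + cos (x/2) * sin (x/2 + π/3) = 3/4 * sin x + √3/4 * (1 - cos x) := by
  have hsin : sin x = 2 * sin (x/2) * cos (x/2) := by rw [← sin_two_mul]; ring_nf
  have hcos : cos x = 2 * cos (x/2) ^ 2 - 1 := by rw [← cos_two_mul]; ring_nf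
  rw [sin_sub, sin_add, cos_pi_div_three, sin_pi_div_three, hsin, hcos]
  ring

theorem div_five_le_three_div_four_mul_sin_add {x : ℝ} (hx₀ : 0 ≤ x) (hxπ : x ≤ π) :
    x/5 ≤ 3/4 * sin x + √3/4 * (1 - cos x) := by
  have hπ : π < 3.15 := pi_lt_d2
  have hsin : 0 ≤ sin x := sin_nonneg_of_nonneg_of_le_pi hx₀ hxπ
  rcases le_total x (π/2) with hx | hx
  · have hjordan : 2 / π * x ≤ sin x := mul_le_sin hx₀ hx
    have hx5 : x/5 ≤ 3/4 * (2 / π * x) := by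
      rw [show 3/4 * (2 / π * x) = x * (3/2) / π by ring, le_div_iff₀ pi_pos]
      nlinarith
    nlinarith [cos_le_one x, sqrt_nonneg 3]
  · have hjordan : 2 / π * (x - π/2) ≤ sin (x - π/2) := mul_le_sin (by linarith) (by linarith)
    rw [sin_sub_pi_div_two] at hjordan
    have hchord : 2 / π * x ≤ 1 - cos x := by
      have h1 : 2 / π * (π/2) = 1 := by field_simp
      linarith [mul_sub (2 / π) x (π/2)]
    have hsqrt : 1.7 ≤ √3 := by
      rw [le_sqrt (by norm_num) (by norm_num)]
      norm_num
    have hx5 : x/5 ≤ √3/4 * (2 / π * x) := by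
      rw [show √3/4 * (2 / π * x) = x * (√3/2) / π by ring, le_div_iff₀ pi_pos]
      nlinarith
    nlinarith [mul_le_mul_of_nonneg_left hchord (by positivity : (0:ℝ) ≤ √3/4)]

theorem div_five_le_sin_sub_pi_div_three_add_cos_mul_sin {x m : ℝ} (hx₀ : 0 ≤ x) (hxπ : x ≤ π)
    (hm : |m| ≤ x/2) : x/5 ≤ sin (x - π/3) + cos m * sin (x/2 + π/3) := by
  have hsin : 0 ≤ sin (x/2 + π/3) :=
    sin_nonneg_of_nonneg_of_le_pi (by linarith [pi_pos]) (by linarith)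
  have hcos : cos (x/2) ≤ cos m := by
    rw [← cos_abs m]
    exact cos_le_cos_of_nonneg_of_le_pi (abs_nonneg m) (by linarith) hm
  calc x/5 ≤ sin (x - π/3) + cos (x/2) * sin (x/2 + π/3) := by
        rw [sin_sub_pi_div_three_add_cos_half_mul_sin_eq]
        exact div_five_le_three_div_four_mul_sin_add hx₀ hxπ
    _ ≤ sin (x - π/3) + cos m * sin (x/2 + π/3) := by gcongr

theorem stmt18_general (K₂ : ℝ) (hK₂ : 0 < K₂)
    (θ₁ θ₂ θ₃ : ℝ)
    (D : ℝ) (hDmem : D ∈ Set.Icc 0 π)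
    (hmid : |θ₂ - (θ₃ + θ₁)/2| ≤ D/2) :
    -(2*K₂/3) * (sin (D - π/3) + cos (θ₂ - (θ₃ + θ₁)/2) * sin (D/2 + π/3))
      ≤ -(2*K₂/15) * D := by
  have h := div_five_le_sin_sub_pi_div_three_add_cos_mul_sin hDmem.1 hDmem.2 hmid
  nlinarith [mul_le_mul_of_nonneg_left h hK₂.le]

theorem stmt18 (K₂ : ℝ) (hK₂ : 0 < K₂)
    (θ₁ θ₂ θ₃ : ℝ) (h₁₂ : θ₁ ≤ θ₂) (h₂₃ : θ₂ ≤ θ₃)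
    (D : ℝ) (hD : D = θ₃ - θ₁) (hDmem : D ∈ Set.Icc 0 π)
    (hmid : |θ₂ - (θ₃ + θ₁)/2| ≤ D/2) :
    -(2*K₂/3) * (sin (D - π/3) + cos (θ₂ - (θ₃ + θ₁)/2) * sin (D/2 + π/3))
      ≤ -(2*K₂/15) * D :=
  stmt18_general K₂ hK₂ θ₁ θ₂ θ₃ D hDmem hmid
end
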